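/- Let $(\Omega, \mathcal{F}, P)$ be a probability space, $G \ge 1$, $p \in (0,1)$, $\varepsilon \ge 0$, and let $(r_j, X_j)_{j=1}^G$ with $r_j : \Omega \to \{\text{true}, \text{false}\}$ and $X_j : \Omega \to \mathbb{R}$ be independent, identically distributed pairs such that almost surely $0 \le X_j \le 1$, $P(r_1 = \text{true}) = p$, and the conditional means $\mu_h = \frac{1}{p}\mathbb{E}[X_1 \mathbf{1}_{\{r_1 = \text{true}\}}]$ and $\mu_l = \frac{1}{1-p}\mathbb{E}[X_1 \mathbf{1}_{\{r_1 = \text{false}\}}]$ satisfy $|\mu_h - \mu_l| \ge \varepsilon$. Define $\bar{X} = \frac{1}{G}\sum_{j=1}^G X_j$ and $\sigma_g^2 = \frac{1}{G}\sum_{j=1}^G (X_j - \bar{X})^2$. Then $\mathbb{E}[\sigma_g^2] \ge \frac{G-1}{G}\, p(1-p)\, \varepsilon^2$. -/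

import Mathlib

/-!
For i.i.d. square-integrable samples, the expected `1/G`-normalised within-group second moment
is `(G - 1) / G · Var X₁`. It then suffices to bound `Var X₁` below by its between-group part:
with `A = {r₁ = true}` one has `Cov(X₁, 1_A) = p (1 - p) (μh - μl)` and `Var 1_A = p (1 - p)`,
so the Cauchy–Schwarz inequality for covariances gives `Var X₁ ≥ p (1 - p) (μh - μl)² ≥ p (1 - p) ε²`.
-/

open MeasureTheory ProbabilityTheory

section Covariance

variable {Ω : Type*} [MeasurableSpace Ω] {μ : Measure Ω} {X : Ω → ℝ} {A : Set Ω}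

lemma covariance_sq_le_variance_mul_variance [IsFiniteMeasure μ] {Y : Ω → ℝ}
    (hX : MemLp X 2 μ) (hY : MemLp Y 2 μ) : cov[X, Y; μ] ^ 2 ≤ Var[X; μ] * Var[Y; μ] := by
  have hquad (t : ℝ) : 0 ≤ Var[Y; μ] * (t * t) + (-2 * cov[X, Y; μ]) * t + Var[X; μ] := by
    have := variance_nonneg (X - t • Y) μ
    rw [variance_sub hX (hY.const_smul t), variance_smul, covariance_smul_right] at this
    linarith
  have := discrim_le_zero hquad
  rw [discrim] at this
  linarith

lemma integral_mul_indicator_one (hA : MeasurableSet A) (X : Ω → ℝ) :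
    ∫ ω, X ω * A.indicator (fun _ => (1 : ℝ)) ω ∂μ = ∫ ω in A, X ω ∂μ := by
  rw [← integral_indicator hA]
  congr with ω
  by_cases h : ω ∈ A <;> simp [h]

lemma memLp_indicator_one [IsFiniteMeasure μ] (hA : MeasurableSet A) :
    MemLp (A.indicator (fun _ => (1 : ℝ))) 2 μ :=
  (memLp_const 1).indicator hA

variable [IsProbabilityMeasure μ]

lemma variance_indicator_one (hA : MeasurableSet A) :
    Var[A.indicator (fun _ => (1 : ℝ)); μ] = μ.real A * (1 - μ.real A) := by
  rw [variance_eq_sub (memLp_indicator_one hA)]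
  have hsq (ω : Ω) : A.indicator (fun _ => (1 : ℝ)) ω ^ 2 = A.indicator (fun _ => 1) ω := by
    by_cases h : ω ∈ A <;> simp [h]
  simp only [Pi.pow_apply, hsq, integral_indicator_const _ hA, smul_eq_mul, mul_one]
  ring

lemma covariance_indicator_one_right (hA : MeasurableSet A) (hX : MemLp X 2 μ) :
    cov[X, A.indicator (fun _ => (1 : ℝ)); μ] = ∫ ω in A, X ω ∂μ - μ.real A * ∫ ω, X ω ∂μ := by
  rw [covariance_eq_sub hX (memLp_indicator_one hA)]
  simp only [Pi.mul_apply, integral_mul_indicator_one hA, integral_indicator_const _ hA,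
    smul_eq_mul]
  ring

lemma mul_sq_sub_setIntegral_le_variance (hA : MeasurableSet A) {p : ℝ} (hPA : μ.real A = p)
    (hp0 : 0 < p) (hp1 : p < 1) (hX : MemLp X 2 μ) :
    p * (1 - p) * (1 / p * ∫ ω in A, X ω ∂μ - 1 / (1 - p) * ∫ ω in Aᶜ, X ω ∂μ) ^ 2
      ≤ Var[X; μ] := by
  have hcs := covariance_sq_le_variance_mul_variance hX (memLp_indicator_one hA)
  rw [covariance_indicator_one_right hA hX, variance_indicator_one hA, hPA,
    ← integral_add_compl hA (hX.integrable one_le_two)] at hcs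
  have hq1 : 0 < 1 - p := sub_pos.2 hp1
  calc _ = ((1 - p) * ∫ ω in A, X ω ∂μ - p * ∫ ω in Aᶜ, X ω ∂μ) ^ 2 / (p * (1 - p)) := by
        field_simp
    _ ≤ Var[X; μ] := by
        rw [div_le_iff₀ (mul_pos hp0 hq1)]
        linear_combination hcs

end Covariance

section SampleMean

variable {ι : Type*} [Fintype ι]

noncomputable def sampleMean (x : ι → ℝ) : ℝ := (1 / Fintype.card ι : ℝ) * ∑ i, x i

lemma sampleMean_const [Nonempty ι] (c : ℝ) : sampleMean (fun _ : ι => c) = c := by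
  simp [sampleMean]

lemma sampleMean_sq_sub_sampleMean (x : ι → ℝ) :
    sampleMean (fun j => (x j - sampleMean x) ^ 2)
      = sampleMean (fun j => x j ^ 2) - sampleMean x ^ 2 := by
  rcases isEmpty_or_nonempty ι with _ | _
  · simp [sampleMean]
  simp only [sampleMean, sub_sq, Finset.sum_add_distrib, Finset.sum_sub_distrib, ← Finset.sum_mul,
    ← Finset.mul_sum, Finset.sum_const, Finset.card_univ, nsmul_eq_mul]
  field_simp
  ring

variable {Ω : Type*} [MeasurableSpace Ω] {P : Measure Ω} {X : ι → Ω → ℝ}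

lemma memLp_sampleMean {q : ENNReal} (hX : ∀ i, MemLp (X i) q P) :
    MemLp (fun ω => sampleMean (fun i => X i ω)) q P :=
  (memLp_finsetSum _ fun i _ => hX i).const_mul _

lemma integrable_sampleMean (hX : ∀ i, Integrable (X i) P) :
    Integrable (fun ω => sampleMean (fun i => X i ω)) P :=
  (integrable_finsetSum _ fun i _ => hX i).const_mul _

lemma integral_sampleMean (hX : ∀ i, Integrable (X i) P) :
    ∫ ω, sampleMean (fun i => X i ω) ∂P = sampleMean (fun i => ∫ ω, X i ω ∂P) := by
  simp only [sampleMean]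
  rw [integral_const_mul, integral_finsetSum _ fun i _ => hX i]

lemma variance_sampleMean [IsFiniteMeasure P] (hX : ∀ i, MemLp (X i) 2 P)
    (hindep : Pairwise fun i j => X i ⟂ᵢ[P] X j) :
    Var[fun ω => sampleMean (fun i => X i ω); P]
      = sampleMean (fun i => Var[X i; P]) / Fintype.card ι := by
  have hsum := IndepFun.variance_sum (s := Finset.univ) (fun i _ => hX i)
    fun i _ j _ hij => hindep hij
  have hfun : (fun ω => ∑ i, X i ω) = ∑ i, X i := by ext; simp
  simp only [sampleMean]
  rw [variance_const_mul, hfun, hsum]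
  ring

lemma integral_sampleMean_sq_sub_sampleMean [IsProbabilityMeasure P] {i₀ : ι}
    (hX : ∀ i, MemLp (X i) 2 P) (hindep : Pairwise fun i j => X i ⟂ᵢ[P] X j)
    (hident : ∀ i, IdentDistrib (X i) (X i₀) P P) :
    ∫ ω, sampleMean (fun j => (X j ω - sampleMean (fun k => X k ω)) ^ 2) ∂P
      = ((Fintype.card ι : ℝ) - 1) / Fintype.card ι * Var[X i₀; P] := by
  have : Nonempty ι := ⟨i₀⟩
  have hM := memLp_sampleMean hX
  have hmean : ∫ ω, sampleMean (fun i => X i ω) ∂P = ∫ ω, X i₀ ω ∂P := by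
    rw [integral_sampleMean fun i => (hX i).integrable one_le_two]
    simp only [fun i => (hident i).integral_eq, sampleMean_const]
  have hsq : ∫ ω, sampleMean (fun i => X i ω ^ 2) ∂P = ∫ ω, X i₀ ω ^ 2 ∂P := by
    have h (i : ι) : ∫ ω, X i ω ^ 2 ∂P = ∫ ω, X i₀ ω ^ 2 ∂P :=
      ((hident i).comp (measurable_id.pow_const 2)).integral_eq
    rw [integral_sampleMean fun i => (hX i).integrable_sq]
    simp only [h, sampleMean_const]
  have hvar : Var[fun ω => sampleMean (fun i => X i ω); P] = Var[X i₀; P] / Fintype.card ι := by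
    rw [variance_sampleMean hX hindep]
    simp only [fun i => (hident i).variance_eq, sampleMean_const]
  simp only [sampleMean_sq_sub_sampleMean]
  rw [integral_sub (integrable_sampleMean fun i => (hX i).integrable_sq) hM.integrable_sq, hsq]
  have hM2 := variance_eq_sub hM
  have hX2 := variance_eq_sub (hX i₀)
  simp only [Pi.pow_apply, hmean, hvar] at hM2 hX2
  calc _ = Var[X i₀; P] - Var[X i₀; P] / Fintype.card ι := by linarith
    _ = _ := by field_simp

end SampleMean

theorem variance_guarantee_via_reward_conditioning
    {Ω : Type*} [MeasurableSpace Ω] (P : Measure Ω) [IsProbabilityMeasure P]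
    {G : ℕ} (hG : 1 ≤ G) {p : ℝ} (hp0 : 0 < p) (hp1 : p < 1)
    {ε : ℝ} (hε : 0 ≤ ε)
    (r : Fin G → Ω → Bool) (X : Fin G → Ω → ℝ)
    (hmeas : ∀ j, Measurable (fun ω => (r j ω, X j ω)))
    (hindep : iIndepFun (fun j ω => (r j ω, X j ω)) P)
    (hident : ∀ j, IdentDistrib (fun ω => (r j ω, X j ω))
        (fun ω => (r ⟨0, hG⟩ ω, X ⟨0, hG⟩ ω)) P P)
    (hbound : ∀ j, ∀ᵐ ω ∂P, X j ω ∈ Set.Icc (0 : ℝ) 1)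
    (hPr : P {ω | r ⟨0, hG⟩ ω = true} = ENNReal.ofReal p)
    (μh μl : ℝ)
    (hμh : μh = (1 / p) *
        ∫ ω, X ⟨0, hG⟩ ω * Set.indicator {ω | r ⟨0, hG⟩ ω = true} (fun _ => (1 : ℝ)) ω ∂P)
    (hμl : μl = (1 / (1 - p)) *
        ∫ ω, X ⟨0, hG⟩ ω * Set.indicator {ω | r ⟨0, hG⟩ ω = false} (fun _ => (1 : ℝ)) ω ∂P)
    (hsep : ε ≤ |μh - μl|) :
    ((G - 1 : ℝ) / G) * (p * (1 - p)) * ε ^ 2 ≤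
      ∫ ω, (1 / G : ℝ) * ∑ j, (X j ω - (1 / G : ℝ) * ∑ k, X k ω) ^ 2 ∂P := by
  set j₀ : Fin G := ⟨0, hG⟩
  set A := {ω | r j₀ ω = true}
  have hX (j : Fin G) : MemLp (X j) 2 P :=
    memLp_of_bounded (hbound j) (measurable_snd.comp (hmeas j)).aestronglyMeasurable 2
  have hpair : Pairwise fun i j => X i ⟂ᵢ[P] X j := fun i j hij =>
    (hindep.comp (fun _ => Prod.snd) fun _ => measurable_snd).indepFun hij
  have hsample := integral_sampleMean_sq_sub_sampleMean hX hpair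
    fun j => (hident j).comp measurable_snd
  simp only [sampleMean, Fintype.card_fin] at hsample
  have hA : MeasurableSet A := (measurable_fst.comp (hmeas j₀)) (measurableSet_singleton true)
  have hPA : P.real A = p := by simp [measureReal_def, hPr, hp0.le]
  have hAc : {ω | r j₀ ω = false} = Aᶜ := by ext; simp [A]
  rw [integral_mul_indicator_one hA] at hμh
  rw [hAc, integral_mul_indicator_one hA.compl] at hμl
  have hbetween := mul_sq_sub_setIntegral_le_variance hA hPA hp0 hp1 (hX j₀)
  rw [← hμh, ← hμl] at hbetween
  have hsep_sq : ε ^ 2 ≤ (μh - μl) ^ 2 := by simpa using pow_le_pow_left₀ hε hsep 2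
  have hG' : (0 : ℝ) ≤ (G - 1) / G :=
    div_nonneg (sub_nonneg.2 (by exact_mod_cast hG)) (by positivity)
  rw [hsample, mul_assoc]
  gcongr
  exact (mul_le_mul_of_nonneg_left hsep_sq (mul_pos hp0 (sub_pos.2 hp1)).le).trans hbetween
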